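/- arXiv:2312.08407 — 2 statements merged into one kernel-verified Lean document; each statement's English description precedes it below -/
import Mathlib

section
/- Let 1 ≤ p < ∞, let ρ : [0,1] → ℝ be bounded and measurable, and let y ∈ (0,1). Then ‖ρ − G_y(ρ)‖_p ≤ 2 (1 − y)^{−1/p} τ(ρ, y)_p. (Theorem 4.1, estimate for G_y.) -/
open MeasureTheory Set Real

/-- Local modulus of continuity of `ρ` at `x` with radius `δ`, relative to `[0,1]`. -/
noncomputable def omegaMod (ρ : ℝ → ℝ) (x δ : ℝ) : ℝ :=
  sSup {d : ℝ | ∃ u ∈ Icc (x - δ) (x + δ) ∩ Icc (0:ℝ) 1,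
    ∃ v ∈ Icc (x - δ) (x + δ) ∩ Icc (0:ℝ) 1, d = |ρ u - ρ v|}

/-- One-sided operator `G_y`. -/
noncomputable def Gop (y : ℝ) (ρ : ℝ → ℝ) (x : ℝ) : ℝ :=
  ∫ t in (0:ℝ)..1, (ρ ((1 - y) * x + y * t) - omegaMod ρ ((1 - y) * x + y * t) y)

/-- One-sided operator `H_y`. -/
noncomputable def Hop (y : ℝ) (ρ : ℝ → ℝ) (x : ℝ) : ℝ :=
  ∫ t in (0:ℝ)..1, (ρ ((1 - y) * x + y * t) + omegaMod ρ ((1 - y) * x + y * t) y)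

/-- `L^p` norm on `[0,1]`. -/
noncomputable def lpNorm (p : ℝ) (f : ℝ → ℝ) : ℝ :=
  (∫ x in (0:ℝ)..1, |f x| ^ p) ^ (1 / p)

/-- Averaged modulus of smoothness `τ(ρ, δ)_p`. -/
noncomputable def tau (p : ℝ) (ρ : ℝ → ℝ) (δ : ℝ) : ℝ :=
  lpNorm p (fun x => omegaMod ρ x δ)

/-- The step function `Φ`. -/
noncomputable def stepPhi (x : ℝ) : ℝ := if 0 < x then 1 else 0

/-- Operator `M_k` built from polynomials `P ≤ Φ ≤ Q`, applied to `f` with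
`f x = f 0 + ∫_0^x g`. -/
noncomputable def Mop (P Q : Polynomial ℝ) (f0 : ℝ) (g : ℝ → ℝ) (x : ℝ) : ℝ :=
  f0 + (∫ t in (0:ℝ)..1, P.eval (x - t) * max (g t) 0)
     - ∫ t in (0:ℝ)..1, Q.eval (x - t) * max (-g t) 0

/-- Operator `N_k` built from polynomials `P ≤ Φ ≤ Q`, applied to `f` with
`f x = f 0 + ∫_0^x g`. -/
noncomputable def Nop (P Q : Polynomial ℝ) (f0 : ℝ) (g : ℝ → ℝ) (x : ℝ) : ℝ :=
  f0 + (∫ t in (0:ℝ)..1, Q.eval (x - t) * max (g t) 0)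
     - ∫ t in (0:ℝ)..1, P.eval (x - t) * max (-g t) 0

/-- Degree of best one-sided approximation by polynomials of degree at most `k`. -/
noncomputable def bestE (p : ℝ) (k : ℕ) (ρ : ℝ → ℝ) : ℝ :=
  sInf {c : ℝ | ∃ P Q : Polynomial ℝ, P.natDegree ≤ k ∧ Q.natDegree ≤ k ∧
    (∀ x ∈ Icc (0:ℝ) 1, P.eval x ≤ ρ x ∧ ρ x ≤ Q.eval x) ∧
    c = lpNorm p (fun x => Q.eval x - P.eval x)}

/-!
Write `ω s` for `omegaMod ρ s y` and `A h x = ∫₀¹ h((1 - y) x + y t) dt`. For `x, t ∈ [0,1]` the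
point `s = (1 - y) x + y t` lies in `[0,1]` with `|x - s| ≤ y`, so `0 ≤ ρ x - (ρ s - ω s) ≤ 2 ω s`;
averaging in `t` gives `|ρ x - G_y ρ x| ≤ A (2 ω) x`. Jensen's inequality gives
`(A h)^p ≤ A (h^p)`, and Fubini followed by the substitution `s = (1 - y) x + y t` in `x` gives
`∫₀¹ A k ≤ (1 - y)⁻¹ ∫₀¹ k`; together `‖ρ - G_y ρ‖_p ≤ (1 - y)^(-1/p) ‖2 ω‖_p`.

Fubini needs `ω` measurable; we use its extension by zero off `[0,1]`. On `[0,1]`, `ω` is the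
window supremum of `ρ` plus that of `-ρ`, and `{x | c < sup_{[x-y, x+y] ∩ [0,1]} ρ}` is, on `[0,1]`,
the Minkowski sum `E + [-y, y] = (E + (-y, y)) ∪ (E - y) ∪ (E + y)` of a measurable set `E`: an
open set and two translates of `E`.
-/

open scoped Pointwise

theorem MeasurableSet.add_Icc {E : Set ℝ} (hE : MeasurableSet E) (a b : ℝ) :
    MeasurableSet (E + Icc a b) := by
  rcases lt_or_ge b a with hba | hab
  · rw [Icc_eq_empty hba.not_ge, add_empty]
    exact .empty
  have translate : ∀ c, MeasurableSet (E + {c}) := fun c => by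
    rw [add_singleton]
    exact (MeasurableEquiv.addRight c).measurableEmbedding.measurableSet_image.2 hE
  rw [← Ioo_union_both hab, add_union, insert_eq, add_union]
  exact isOpen_Ioo.add_left.measurableSet.union ((translate a).union (translate b))

noncomputable def windowSup (ρ : ℝ → ℝ) (δ x : ℝ) : ℝ :=
  sSup (ρ '' (Icc (x - δ) (x + δ) ∩ Icc 0 1))

lemma self_mem_window {x δ : ℝ} (hδ : 0 ≤ δ) (hx : x ∈ Icc (0:ℝ) 1) :
    x ∈ Icc (x - δ) (x + δ) ∩ Icc 0 1 :=
  ⟨⟨by linarith, by linarith⟩, hx⟩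

lemma lt_windowSup_iff {ρ : ℝ → ℝ} (hρ : BddAbove (ρ '' Icc 0 1)) {δ x c : ℝ} (hδ : 0 ≤ δ)
    (hx : x ∈ Icc (0:ℝ) 1) :
    c < windowSup ρ δ x ↔ x ∈ (Icc 0 1 ∩ ρ ⁻¹' Ioi c) + Icc (-δ) δ := by
  rw [windowSup, lt_csSup_iff (hρ.mono (image_mono inter_subset_right))
    ⟨ρ x, mem_image_of_mem ρ (self_mem_window hδ hx)⟩, exists_mem_image, mem_add]
  refine exists_congr fun u => ⟨fun ⟨⟨hux, hu⟩, hcu⟩ => ⟨⟨hu, hcu⟩, x - u, ?_, by ring⟩,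
    fun ⟨⟨hu, hcu⟩, d, hd, hud⟩ => ⟨⟨⟨?_, ?_⟩, hu⟩, hcu⟩⟩
  · exact ⟨by linarith [hux.2], by linarith [hux.1]⟩
  all_goals linarith [hd.1, hd.2]

lemma measurable_indicator_windowSup {ρ : ℝ → ℝ} (hρ : Measurable ρ)
    (hbdd : BddAbove (ρ '' Icc 0 1)) {δ : ℝ} (hδ : 0 ≤ δ) :
    Measurable ((Icc (0:ℝ) 1).indicator (windowSup ρ δ)) := by
  refine measurable_of_Ioi fun c => ?_
  have hpre : (Icc (0:ℝ) 1).indicator (windowSup ρ δ) ⁻¹' Ioi c =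
      Icc 0 1 ∩ ((Icc 0 1 ∩ ρ ⁻¹' Ioi c) + Icc (-δ) δ) ∪ (Icc 0 1)ᶜ ∩ {_x | c < 0} := by
    ext x
    by_cases hx : x ∈ Icc (0:ℝ) 1
    · simp [hx, lt_windowSup_iff hbdd hδ hx]
    · simp [hx]
  rw [hpre]
  have hE : MeasurableSet (Icc 0 1 ∩ ρ ⁻¹' Ioi c) := measurableSet_Icc.inter (hρ measurableSet_Ioi)
  exact (measurableSet_Icc.inter (hE.add_Icc _ _)).union (measurableSet_Icc.compl.inter (.const _))

lemma bddAbove_image_of_abs_le {α : Type*} {f : α → ℝ} {s : Set α} {M : ℝ}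
    (h : ∀ u ∈ s, |f u| ≤ M) : BddAbove (f '' s) :=
  ⟨M, forall_mem_image.2 fun u hu => (le_abs_self _).trans (h u hu)⟩

section omegaMod

variable {ρ : ℝ → ℝ} {M δ x : ℝ}

lemma abs_sub_le_omegaMod (hM : ∀ u ∈ Icc (0:ℝ) 1, |ρ u| ≤ M) {u v : ℝ}
    (hu : u ∈ Icc (x - δ) (x + δ) ∩ Icc 0 1) (hv : v ∈ Icc (x - δ) (x + δ) ∩ Icc 0 1) :
    |ρ u - ρ v| ≤ omegaMod ρ x δ := by
  refine le_csSup ⟨2 * M, ?_⟩ ⟨u, hu, v, hv, rfl⟩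
  rintro _ ⟨u, hu, v, hv, rfl⟩
  linarith [abs_sub (ρ u) (ρ v), hM u hu.2, hM v hv.2]

lemma omegaMod_nonneg (hM : ∀ u ∈ Icc (0:ℝ) 1, |ρ u| ≤ M) (hδ : 0 ≤ δ) (hx : x ∈ Icc (0:ℝ) 1) :
    0 ≤ omegaMod ρ x δ := by
  simpa using abs_sub_le_omegaMod hM (self_mem_window hδ hx) (self_mem_window hδ hx)

lemma omegaMod_le (hM : ∀ u ∈ Icc (0:ℝ) 1, |ρ u| ≤ M) (hδ : 0 ≤ δ) (hx : x ∈ Icc (0:ℝ) 1) :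
    omegaMod ρ x δ ≤ 2 * M := by
  refine csSup_le ⟨_, x, self_mem_window hδ hx, x, self_mem_window hδ hx, rfl⟩ ?_
  rintro _ ⟨u, hu, v, hv, rfl⟩
  linarith [abs_sub (ρ u) (ρ v), hM u hu.2, hM v hv.2]

lemma omegaMod_eq_windowSup_add_windowSup_neg (hM : ∀ u ∈ Icc (0:ℝ) 1, |ρ u| ≤ M)
    (hδ : 0 ≤ δ) (hx : x ∈ Icc (0:ℝ) 1) :
    omegaMod ρ x δ = windowSup ρ δ x + windowSup (-ρ) δ x := by
  set W := Icc (x - δ) (x + δ) ∩ Icc (0:ℝ) 1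
  have hW : x ∈ W := self_mem_window hδ hx
  have bddρ := bddAbove_image_of_abs_le fun u (hu : u ∈ W) => hM u hu.2
  have bddρ' := bddAbove_image_of_abs_le (f := -ρ) fun u (hu : u ∈ W) => by simpa using hM u hu.2
  have hS := csSup_add ⟨_, mem_image_of_mem ρ hW⟩ bddρ ⟨_, mem_image_of_mem (-ρ) hW⟩ bddρ'
  have hdiff : ∀ u ∈ W, ∀ v ∈ W, ρ u - ρ v ∈ ρ '' W + (-ρ) '' W := fun u hu v hv =>
    ⟨ρ u, mem_image_of_mem ρ hu, -ρ v, mem_image_of_mem (-ρ) hv, by simp [sub_eq_add_neg]⟩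
  have hsub : {d : ℝ | ∃ u ∈ W, ∃ v ∈ W, d = |ρ u - ρ v|} ⊆ ρ '' W + (-ρ) '' W := by
    rintro _ ⟨u, hu, v, hv, rfl⟩
    rcases abs_choice (ρ u - ρ v) with h | h <;> rw [h]
    · exact hdiff u hu v hv
    · rw [neg_sub]
      exact hdiff v hv u hu
  rw [windowSup, windowSup, ← hS]
  refine le_antisymm (csSup_le_csSup (bddρ.add bddρ') ⟨_, x, hW, x, hW, rfl⟩ hsub) ?_
  refine csSup_le (Nonempty.add ⟨_, mem_image_of_mem ρ hW⟩ ⟨_, mem_image_of_mem (-ρ) hW⟩) ?_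
  rintro _ ⟨_, ⟨u, hu, rfl⟩, _, ⟨v, hv, rfl⟩, rfl⟩
  calc ρ u + (-ρ) v ≤ |ρ u - ρ v| := by simpa [← sub_eq_add_neg] using le_abs_self (ρ u - ρ v)
    _ ≤ omegaMod ρ x δ := abs_sub_le_omegaMod hM hu hv

lemma measurable_indicator_omegaMod (hρ : Measurable ρ) (hM : ∀ u ∈ Icc (0:ℝ) 1, |ρ u| ≤ M)
    (hδ : 0 ≤ δ) : Measurable ((Icc (0:ℝ) 1).indicator fun x => omegaMod ρ x δ) := by
  rw [indicator_congr fun x hx => omegaMod_eq_windowSup_add_windowSup_neg hM hδ hx,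
    indicator_add]
  exact (measurable_indicator_windowSup hρ (bddAbove_image_of_abs_le hM) hδ).add
    (measurable_indicator_windowSup hρ.neg
      (bddAbove_image_of_abs_le (f := -ρ) fun u hu => by simpa using hM u hu) hδ)

lemma indicator_omegaMod_nonneg (hM : ∀ u ∈ Icc (0:ℝ) 1, |ρ u| ≤ M) (hδ : 0 ≤ δ) (x : ℝ) :
    0 ≤ (Icc (0:ℝ) 1).indicator (fun x => omegaMod ρ x δ) x :=
  indicator_nonneg (fun _ hx => omegaMod_nonneg hM hδ hx) x

lemma indicator_omegaMod_le (hM : ∀ u ∈ Icc (0:ℝ) 1, |ρ u| ≤ M) (hδ : 0 ≤ δ) (x : ℝ) :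
    (Icc (0:ℝ) 1).indicator (fun x => omegaMod ρ x δ) x ≤ 2 * M := by
  have hM0 : 0 ≤ M := (abs_nonneg _).trans (hM 0 ⟨le_rfl, zero_le_one⟩)
  exact indicator_apply_le' (fun hx => omegaMod_le hM hδ hx) fun _ => by positivity

end omegaMod

lemma intervalIntegrable_of_abs_le {f : ℝ → ℝ} {a b C : ℝ} (hab : a ≤ b) (hf : Measurable f)
    (hC : ∀ x ∈ Icc a b, |f x| ≤ C) : IntervalIntegrable f volume a b := by
  refine (intervalIntegrable_const (c := C)).mono_fun' hf.aestronglyMeasurable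
    (ae_restrict_of_forall_mem measurableSet_uIoc fun x hx => ?_)
  rw [uIoc_of_le hab] at hx
  exact hC x (Ioc_subset_Icc_self hx)

instance : IsProbabilityMeasure (volume.restrict (Ioc (0:ℝ) 1)) := ⟨by simp⟩

theorem rpow_integral_le_integral_rpow {α : Type*} [MeasurableSpace α] {μ : Measure α}
    [IsProbabilityMeasure μ] {f : α → ℝ} {p : ℝ} (hp : 1 ≤ p) (hf0 : ∀ᵐ a ∂μ, 0 ≤ f a)
    (hf : Integrable f μ) (hfp : Integrable (fun a => f a ^ p) μ) :
    (∫ a, f a ∂μ) ^ p ≤ ∫ a, f a ^ p ∂μ :=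
  (convexOn_rpow hp).map_integral_le (continuous_rpow_const (by linarith)).continuousOn
    isClosed_Ici hf0 hf hfp

-- `Gop y ρ` is definitionally `affineAvg y (fun s => ρ s - omegaMod ρ s y)`.
noncomputable def affineAvg (y : ℝ) (h : ℝ → ℝ) (x : ℝ) : ℝ :=
  ∫ t in (0:ℝ)..1, h ((1 - y) * x + y * t)

section affineAvg

variable {y : ℝ} {h : ℝ → ℝ} {C : ℝ}

lemma affine_mem_Icc (hy : y ∈ Icc (0:ℝ) 1) {x t : ℝ} (hx : x ∈ Icc (0:ℝ) 1)
    (ht : t ∈ Icc (0:ℝ) 1) : (1 - y) * x + y * t ∈ Icc (0:ℝ) 1 := by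
  simpa using convex_Icc (0:ℝ) 1 hx ht (by linarith [hy.2]) hy.1 (by ring)

lemma intervalIntegrable_comp_affine (hh : Measurable h) (h0 : ∀ x, 0 ≤ h x)
    (hC : ∀ x, h x ≤ C) (x : ℝ) :
    IntervalIntegrable (fun t => h ((1 - y) * x + y * t)) volume 0 1 :=
  intervalIntegrable_of_abs_le zero_le_one (hh.comp (by fun_prop)) fun t _ =>
    (abs_of_nonneg (h0 _)).trans_le (hC _)

lemma measurable_affineAvg (hh : Measurable h) : Measurable (affineAvg y h) := by
  have hF : Measurable fun q : ℝ × ℝ => h ((1 - y) * q.1 + y * q.2) := hh.comp (by fun_prop)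
  unfold affineAvg
  simp only [intervalIntegral.integral_of_le zero_le_one]
  exact (hF.stronglyMeasurable.integral_prod_right' (ν := volume.restrict (Ioc 0 1))).measurable

lemma affineAvg_nonneg (h0 : ∀ x, 0 ≤ h x) (x : ℝ) : 0 ≤ affineAvg y h x :=
  intervalIntegral.integral_nonneg zero_le_one fun _ _ => h0 _

lemma affineAvg_le (hh : Measurable h) (h0 : ∀ x, 0 ≤ h x) (hC : ∀ x, h x ≤ C) (x : ℝ) :
    affineAvg y h x ≤ C := by
  simpa [affineAvg] using intervalIntegral.integral_mono_on zero_le_one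
    (intervalIntegrable_comp_affine hh h0 hC x) intervalIntegrable_const fun t _ => hC _

lemma intervalIntegrable_affineAvg (hh : Measurable h) (h0 : ∀ x, 0 ≤ h x)
    (hC : ∀ x, h x ≤ C) : IntervalIntegrable (affineAvg y h) volume 0 1 :=
  intervalIntegrable_of_abs_le zero_le_one (measurable_affineAvg hh) fun x _ =>
    (abs_of_nonneg (affineAvg_nonneg h0 x)).trans_le (affineAvg_le hh h0 hC x)

lemma rpow_affineAvg_le {p : ℝ} (hp : 1 ≤ p) (hh : Measurable h) (h0 : ∀ x, 0 ≤ h x)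
    (hC : ∀ x, h x ≤ C) (x : ℝ) : affineAvg y h x ^ p ≤ affineAvg y (fun s => h s ^ p) x := by
  have hp0 : 0 ≤ p := by linarith
  have hint := intervalIntegrable_comp_affine (y := y) hh h0 hC x
  have hint_p := intervalIntegrable_comp_affine (y := y) (hh.pow_const p)
    (fun s => rpow_nonneg (h0 s) p) (fun s => rpow_le_rpow (h0 s) (hC s) hp0) x
  simp only [affineAvg, intervalIntegral.integral_of_le zero_le_one]
  exact rpow_integral_le_integral_rpow hp (ae_of_all _ fun t => h0 _) hint.1 hint_p.1

lemma integral_comp_affine_le (hy : y ∈ Ico (0:ℝ) 1) {t : ℝ} (ht : t ∈ Icc (0:ℝ) 1)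
    (h0 : ∀ x ∈ Icc (0:ℝ) 1, 0 ≤ h x) (hh : IntervalIntegrable h volume 0 1) :
    ∫ x in (0:ℝ)..1, h ((1 - y) * x + y * t) ≤ (1 - y)⁻¹ * ∫ x in (0:ℝ)..1, h x := by
  obtain ⟨hy0, hy1⟩ := hy
  rw [intervalIntegral.integral_comp_mul_add h (by linarith) (y * t), smul_eq_mul]
  refine mul_le_mul_of_nonneg_left (intervalIntegral.integral_mono_interval ?_ ?_ ?_
    (ae_restrict_of_forall_mem measurableSet_Ioc fun x hx => h0 x (Ioc_subset_Icc_self hx)) hh)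
    (inv_nonneg.2 (by linarith))
  · nlinarith [ht.1]
  · nlinarith
  · nlinarith [ht.2]

lemma integral_affineAvg_le (hy : y ∈ Ico (0:ℝ) 1) (hh : Measurable h) (h0 : ∀ x, 0 ≤ h x)
    (hC : ∀ x, h x ≤ C) :
    ∫ x in (0:ℝ)..1, affineAvg y h x ≤ (1 - y)⁻¹ * ∫ x in (0:ℝ)..1, h x := by
  set μ := volume.restrict (Ioc (0:ℝ) 1)
  have hF : Integrable (Function.uncurry fun x t => h ((1 - y) * x + y * t)) (μ.prod μ) :=
    Integrable.of_bound (hh.comp (by fun_prop)).aestronglyMeasurable C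
      (ae_of_all _ fun q => (abs_of_nonneg (h0 _)).trans_le (hC _))
  have inner : ∀ t ∈ Ioc (0:ℝ) 1,
      ∫ x, h ((1 - y) * x + y * t) ∂μ ≤ (1 - y)⁻¹ * ∫ x in (0:ℝ)..1, h x := fun t ht => by
    rw [← intervalIntegral.integral_of_le zero_le_one]
    exact integral_comp_affine_le hy (Ioc_subset_Icc_self ht) (fun x _ => h0 x)
      (intervalIntegrable_of_abs_le zero_le_one hh fun x _ =>
        (abs_of_nonneg (h0 x)).trans_le (hC x))
  calc ∫ x in (0:ℝ)..1, affineAvg y h x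
      = ∫ x, ∫ t, h ((1 - y) * x + y * t) ∂μ ∂μ := by
        simp only [affineAvg, intervalIntegral.integral_of_le zero_le_one, μ]
    _ = ∫ t, ∫ x, h ((1 - y) * x + y * t) ∂μ ∂μ := integral_integral_swap hF
    _ ≤ ∫ _t, ((1 - y)⁻¹ * ∫ x in (0:ℝ)..1, h x) ∂μ :=
        integral_mono_of_nonneg (ae_of_all _ fun t => integral_nonneg fun x => h0 _)
          (integrable_const _) (ae_restrict_of_forall_mem measurableSet_Ioc inner)
    _ = (1 - y)⁻¹ * ∫ x in (0:ℝ)..1, h x := by simp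

end affineAvg

section lpNorm

variable {p : ℝ} {f g : ℝ → ℝ}

lemma lpNorm_congr (hfg : ∀ x ∈ Icc (0:ℝ) 1, f x = g x) : lpNorm p f = lpNorm p g := by
  unfold _root_.lpNorm
  congr 1
  refine intervalIntegral.integral_congr fun x hx => ?_
  rw [uIcc_of_le zero_le_one] at hx
  simp only [hfg x hx]

lemma lpNorm_const_mul (hp : 0 < p) (c : ℝ) : lpNorm p (fun x => c * f x) = |c| * lpNorm p f := by
  unfold _root_.lpNorm
  simp_rw [abs_mul, mul_rpow (abs_nonneg c) (abs_nonneg _), intervalIntegral.integral_const_mul]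
  rw [mul_rpow (rpow_nonneg (abs_nonneg c) p)
      (intervalIntegral.integral_nonneg zero_le_one fun x _ => rpow_nonneg (abs_nonneg _) p),
    ← rpow_mul (abs_nonneg c), mul_one_div_cancel hp.ne', rpow_one]

theorem lpNorm_le_of_abs_le_affineAvg {y C : ℝ} {h : ℝ → ℝ} (hp : 1 ≤ p) (hy : y ∈ Ico (0:ℝ) 1)
    (hh : Measurable h) (h0 : ∀ x, 0 ≤ h x) (hC : ∀ x, h x ≤ C)
    (hf : ∀ x ∈ Icc (0:ℝ) 1, |f x| ≤ affineAvg y h x) :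
    lpNorm p f ≤ (1 - y) ^ (-(1 / p)) * lpNorm p h := by
  have hp0 : 0 < p := by linarith
  have hy1 : 0 < 1 - y := by linarith [hy.2]
  have key : ∫ x in (0:ℝ)..1, |f x| ^ p ≤ (1 - y)⁻¹ * ∫ x in (0:ℝ)..1, |h x| ^ p :=
    calc ∫ x in (0:ℝ)..1, |f x| ^ p ≤ ∫ x in (0:ℝ)..1, affineAvg y (fun s => h s ^ p) x := by
          simp only [intervalIntegral.integral_of_le zero_le_one]
          refine integral_mono_of_nonneg (ae_of_all _ fun x => rpow_nonneg (abs_nonneg _) p)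
            (intervalIntegrable_affineAvg (hh.pow_const p) (fun s => rpow_nonneg (h0 s) p)
              (fun s => rpow_le_rpow (h0 s) (hC s) hp0.le)).1
            (ae_restrict_of_forall_mem measurableSet_Ioc fun x hx => ?_)
          exact (rpow_le_rpow (abs_nonneg _) (hf x (Ioc_subset_Icc_self hx)) hp0.le).trans
            (rpow_affineAvg_le hp hh h0 hC x)
      _ ≤ (1 - y)⁻¹ * ∫ x in (0:ℝ)..1, h x ^ p :=
          integral_affineAvg_le hy (hh.pow_const p) (fun s => rpow_nonneg (h0 s) p)
            (fun s => rpow_le_rpow (h0 s) (hC s) hp0.le)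
      _ = (1 - y)⁻¹ * ∫ x in (0:ℝ)..1, |h x| ^ p := by simp_rw [abs_of_nonneg (h0 _)]
  have hI : 0 ≤ ∫ x in (0:ℝ)..1, |h x| ^ p :=
    intervalIntegral.integral_nonneg zero_le_one fun x _ => rpow_nonneg (abs_nonneg _) p
  unfold _root_.lpNorm
  calc (∫ x in (0:ℝ)..1, |f x| ^ p) ^ (1 / p)
      ≤ ((1 - y)⁻¹ * ∫ x in (0:ℝ)..1, |h x| ^ p) ^ (1 / p) :=
        rpow_le_rpow (intervalIntegral.integral_nonneg zero_le_one fun x _ =>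
          rpow_nonneg (abs_nonneg _) p) key (by positivity)
    _ = (1 - y) ^ (-(1 / p)) * (∫ x in (0:ℝ)..1, |h x| ^ p) ^ (1 / p) := by
        rw [mul_rpow (inv_nonneg.2 hy1.le) hI, inv_rpow hy1.le, rpow_neg hy1.le]

end lpNorm

lemma abs_sub_Gop_le {ρ : ℝ → ℝ} {M y x : ℝ} (hρ : Measurable ρ)
    (hM : ∀ u ∈ Icc (0:ℝ) 1, |ρ u| ≤ M) (hy : y ∈ Icc (0:ℝ) 1) (hx : x ∈ Icc (0:ℝ) 1) :
    |ρ x - Gop y ρ x| ≤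
      affineAvg y (fun s => 2 * (Icc (0:ℝ) 1).indicator (fun x => omegaMod ρ x y) s) x := by
  set g := (Icc (0:ℝ) 1).indicator fun x => omegaMod ρ x y
  have hs : ∀ t ∈ Icc (0:ℝ) 1, (1 - y) * x + y * t ∈ Icc (0:ℝ) 1 :=
    fun t ht => affine_mem_Icc hy hx ht
  have hρs : IntervalIntegrable (fun t => ρ ((1 - y) * x + y * t)) volume 0 1 :=
    intervalIntegrable_of_abs_le zero_le_one (hρ.comp (by fun_prop)) fun t ht => hM _ (hs t ht)
  have hgs : IntervalIntegrable (fun t => g ((1 - y) * x + y * t)) volume 0 1 :=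
    intervalIntegrable_comp_affine (measurable_indicator_omegaMod hρ hM hy.1)
      (indicator_omegaMod_nonneg hM hy.1) (indicator_omegaMod_le hM hy.1) x
  have hG : Gop y ρ x =
      ∫ t in (0:ℝ)..1, (ρ ((1 - y) * x + y * t) - g ((1 - y) * x + y * t)) := by
    refine intervalIntegral.integral_congr fun t ht => ?_
    rw [uIcc_of_le zero_le_one] at ht
    simp only [g, indicator_of_mem (hs t ht)]
  have hsub : ρ x - Gop y ρ x =
      ∫ t in (0:ℝ)..1, (ρ x - (ρ ((1 - y) * x + y * t) - g ((1 - y) * x + y * t))) := by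
    rw [hG, intervalIntegral.integral_sub intervalIntegrable_const (hρs.sub hgs)]
    simp
  rw [hsub, affineAvg, ← Real.norm_eq_abs]
  refine intervalIntegral.norm_integral_le_of_norm_le zero_le_one
    (ae_of_all _ fun t ht => ?_) (hgs.const_mul 2)
  have ht' : t ∈ Icc (0:ℝ) 1 := Ioc_subset_Icc_self ht
  have hxs : |x - ((1 - y) * x + y * t)| ≤ y := by
    rw [show x - ((1 - y) * x + y * t) = y * (x - t) by ring, abs_mul, abs_of_nonneg hy.1]
    exact mul_le_of_le_one_right hy.1
      (abs_le.2 ⟨by linarith [hx.1, ht'.2], by linarith [hx.2, ht'.1]⟩)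
  have hosc : |ρ x - ρ ((1 - y) * x + y * t)| ≤ g ((1 - y) * x + y * t) := by
    rw [show g _ = _ from indicator_of_mem (hs t ht') _]
    exact abs_sub_le_omegaMod hM
      ⟨⟨by linarith [(abs_le.1 hxs).1], by linarith [(abs_le.1 hxs).2]⟩, hx⟩
      (self_mem_window hy.1 (hs t ht'))
  rw [Real.norm_eq_abs, sub_sub_eq_add_sub, add_comm, add_sub_assoc]
  linarith [abs_add_le (g ((1 - y) * x + y * t)) (ρ x - ρ ((1 - y) * x + y * t)),
    abs_of_nonneg (indicator_omegaMod_nonneg hM hy.1 ((1 - y) * x + y * t))]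

/-- Theorem 4.1, estimate for `G_y`. -/
theorem stmt6 (p : ℝ) (hp : 1 ≤ p) (ρ : ℝ → ℝ) (hmeas : Measurable ρ)
    (hbdd : ∃ M : ℝ, ∀ x ∈ Icc (0:ℝ) 1, |ρ x| ≤ M)
    (y : ℝ) (hy : y ∈ Ioo (0:ℝ) 1) :
    lpNorm p (fun x => ρ x - Gop y ρ x) ≤
      2 * (1 - y) ^ (-(1 / p) : ℝ) * tau p ρ y := by
  obtain ⟨M, hM⟩ := hbdd
  have hy0 : 0 ≤ y := hy.1.le
  set g := (Icc (0:ℝ) 1).indicator fun x => omegaMod ρ x y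
  calc lpNorm p (fun x => ρ x - Gop y ρ x)
      ≤ (1 - y) ^ (-(1 / p)) * lpNorm p (fun s => 2 * g s) :=
        lpNorm_le_of_abs_le_affineAvg hp ⟨hy0, hy.2⟩
          ((measurable_indicator_omegaMod hmeas hM hy0).const_mul 2)
          (fun s => mul_nonneg zero_le_two (indicator_omegaMod_nonneg hM hy0 s))
          (fun s => mul_le_mul_of_nonneg_left (indicator_omegaMod_le hM hy0 s) zero_le_two)
          fun x hx => abs_sub_Gop_le hmeas hM ⟨hy0, hy.2.le⟩ hx
    _ = 2 * (1 - y) ^ (-(1 / p) : ℝ) * tau p ρ y := by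
        rw [lpNorm_const_mul (by linarith), abs_two, tau,
          lpNorm_congr fun x hx => indicator_of_mem hx _]
        ring
end

section
/- Let k ∈ ℕ, k ≥ 2, and let ρ : [0,1] → ℝ be continuous. Suppose P_k and q_k are algebraic polynomials of degree at most k with P_k(u) ≤ Φ(u) ≤ q_k(u) for all u ∈ [−1, 1]. Define A_k(ρ) = M_k(G_{1/k}(ρ)) and B_k(ρ) = N_k(H_{1/k}(ρ)). Then A_k(ρ) and B_k(ρ) are polynomials of degree at most k and A_k(ρ, x) ≤ ρ(x) ≤ B_k(ρ, x) for every x ∈ [0,1]. (Theorem 4.3, sandwich part.) -/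
open MeasureTheory Set Real

/-!
`G_y(ρ, x)` averages `ρ - ω(ρ, ·, y)` over `[(1 - y) x, (1 - y) x + y] ⊆ [0,1]`, an interval
of length `y` containing `x`, on which the integrand is at most `ρ(x)`; hence `G_y(ρ) ≤ ρ`.
Writing this average as `y⁻¹ ∫` over the moving window shows that `G_y(ρ)` agrees on `[0,1]`
with a `C¹` function, once the integrand is extended continuously beyond `[0,1]`. The integrand
is continuous because, after reparametrising the window by `s ↦ projIcc (z + y s)`,
`ω(ρ, z, y)` is the supremum of a jointly continuous function over the fixed compact square
`[-1,1]²`.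

For `f = f(0) + ∫₀ˣ g` one has `f(x) = f(0) + ∫₀¹ Φ(x - t) g(t) dt`; replacing `Φ` by `P ≤ Φ`
against `g₊` and by `Q ≥ Φ` against `g₋` can only decrease this, so `M(f) ≤ f`, and expanding
`P(x - t)`, `Q(x - t)` in powers of `x` shows that `M(f)` is a polynomial of degree at most `k`.
The upper bound is the same statement for `-ρ`, since `H_y(ρ) = -G_y(-ρ)` and `N(-f) = -M(f)`.
-/

theorem exists_projIcc_eq_iff {z y u : ℝ} (hz : z ∈ Icc (0:ℝ) 1) (hy : 0 < y) :
    (∃ s ∈ Icc (-1:ℝ) 1, (projIcc 0 1 zero_le_one (z + y * s) : ℝ) = u) ↔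
      u ∈ Icc (z - y) (z + y) ∩ Icc 0 1 := by
  constructor
  · rintro ⟨s, hs, rfl⟩
    refine ⟨?_, Subtype.prop _⟩
    have hclamp := abs_projIcc_sub_projIcc zero_le_one (c := z + y * s) (d := z)
    have hshift : |z + y * s - z| ≤ y := by
      rw [add_sub_cancel_left, abs_mul, abs_of_pos hy]
      exact mul_le_of_le_one_right hy.le (abs_le.2 hs)
    rw [projIcc_of_mem _ hz] at hclamp
    have := abs_le.1 (hclamp.trans hshift)
    constructor <;> linarith
  · rintro ⟨hu, hu01⟩
    refine ⟨(u - z) / y, ?_, ?_⟩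
    · rw [mem_Icc, le_div_iff₀ hy, div_le_iff₀ hy]
      constructor <;> linarith [hu.1, hu.2]
    · rw [mul_div_cancel₀ _ hy.ne', add_sub_cancel, projIcc_of_mem _ hu01]

theorem omegaMod_eq_sSup_image (ρ : ℝ → ℝ) {z y : ℝ} (hz : z ∈ Icc (0:ℝ) 1) (hy : 0 < y) :
    omegaMod ρ z y = sSup ((fun p : ℝ × ℝ => |ρ (projIcc 0 1 zero_le_one (z + y * p.1)) -
      ρ (projIcc 0 1 zero_le_one (z + y * p.2))|) '' (Icc (-1) 1 ×ˢ Icc (-1) 1)) := by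
  rw [omegaMod]
  congr 1
  ext d
  constructor
  · rintro ⟨u, hu, v, hv, rfl⟩
    obtain ⟨s, hs, rfl⟩ := (exists_projIcc_eq_iff hz hy).2 hu
    obtain ⟨s', hs', rfl⟩ := (exists_projIcc_eq_iff hz hy).2 hv
    exact ⟨(s, s'), ⟨hs, hs'⟩, rfl⟩
  · rintro ⟨⟨s, s'⟩, ⟨hs, hs'⟩, rfl⟩
    exact ⟨_, (exists_projIcc_eq_iff hz hy).1 ⟨s, hs, rfl⟩,
      _, (exists_projIcc_eq_iff hz hy).1 ⟨s', hs', rfl⟩, rfl⟩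

section omegaMod

variable {ρ : ℝ → ℝ} (hρ : ContinuousOn ρ (Icc 0 1))
include hρ

theorem continuous_abs_sub_comp_projIcc (y : ℝ) :
    Continuous fun q : ℝ × (ℝ × ℝ) => |ρ (projIcc (0:ℝ) 1 zero_le_one (q.1 + y * q.2.1)) -
      ρ (projIcc (0:ℝ) 1 zero_le_one (q.1 + y * q.2.2))| := by
  have hclamp : Continuous fun w => ρ (projIcc (0:ℝ) 1 zero_le_one w) :=
    hρ.comp_continuous (continuous_subtype_val.comp continuous_projIcc) fun w => (projIcc _ _ _ w).2
  exact ((hclamp.comp (by fun_prop)).sub (hclamp.comp (by fun_prop))).abs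

variable {y : ℝ} (hy : 0 < y)
include hy

theorem continuousOn_omegaMod : ContinuousOn (fun z => omegaMod ρ z y) (Icc 0 1) :=
  ((isCompact_Icc.prod isCompact_Icc).continuous_sSup
    (continuous_abs_sub_comp_projIcc hρ y)).continuousOn.congr
    fun _ hz => omegaMod_eq_sSup_image ρ hz hy

theorem continuousOn_sub_omegaMod :
    ContinuousOn (fun s => ρ s - omegaMod ρ s y) (Icc 0 1) :=
  hρ.sub (continuousOn_omegaMod hρ hy)

theorem abs_sub_le_omegaMod_s13 {s x : ℝ} (hs : s ∈ Icc (0:ℝ) 1) (hx : x ∈ Icc (0:ℝ) 1)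
    (hsx : |s - x| ≤ y) : |ρ s - ρ x| ≤ omegaMod ρ s y := by
  rw [omegaMod_eq_sSup_image ρ hs hy]
  obtain ⟨t, ht, hts⟩ := (exists_projIcc_eq_iff hs hy (u := s)).2
    ⟨⟨by linarith, by linarith⟩, hs⟩
  obtain ⟨t', ht', htx⟩ := (exists_projIcc_eq_iff hs hy (u := x)).2
    ⟨⟨by linarith [(abs_le.1 hsx).2], by linarith [(abs_le.1 hsx).1]⟩, hx⟩
  exact le_csSup ((isCompact_Icc.prod isCompact_Icc).image
    ((continuous_abs_sub_comp_projIcc hρ y).comp (.prodMk_right s))).bddAbove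
    ⟨(t, t'), ⟨ht, ht'⟩, by simp only [hts, htx]⟩

end omegaMod

theorem omegaMod_neg (ρ : ℝ → ℝ) (x δ : ℝ) : omegaMod (-ρ) x δ = omegaMod ρ x δ := by
  rw [omegaMod, omegaMod]
  congr 1
  ext d
  constructor <;> rintro ⟨u, hu, v, hv, rfl⟩ <;>
    exact ⟨u, hu, v, hv, by rw [Pi.neg_apply, Pi.neg_apply, neg_sub_neg, abs_sub_comm]⟩

noncomputable def slidingAverage (y : ℝ) (F : ℝ → ℝ) (x : ℝ) : ℝ :=
  ∫ t in (0:ℝ)..1, F ((1 - y) * x + y * t)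

theorem Gop_eq_slidingAverage (y : ℝ) (ρ : ℝ → ℝ) :
    Gop y ρ = slidingAverage y (fun s => ρ s - omegaMod ρ s y) := rfl

theorem Hop_eq_neg_Gop_neg (y : ℝ) (ρ : ℝ → ℝ) : Hop y ρ = -Gop y (-ρ) := by
  ext x
  simp only [Hop, Gop, Pi.neg_apply, omegaMod_neg, ← intervalIntegral.integral_neg, neg_sub,
    sub_neg_eq_add, add_comm]

theorem one_sub_mul_add_mul_mem_Icc {x t y : ℝ} (hx : x ∈ Icc (0:ℝ) 1) (ht : t ∈ Icc (0:ℝ) 1)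
    (hy0 : 0 ≤ y) (hy1 : y ≤ 1) : (1 - y) * x + y * t ∈ Icc (0:ℝ) 1 :=
  convex_Icc 0 1 hx ht (sub_nonneg.2 hy1) hy0 (by ring)

section slidingAverage

variable {F : ℝ → ℝ} {y : ℝ}

theorem slidingAverage_eq_integral (hy : y ≠ 0) (x : ℝ) :
    slidingAverage y F x = y⁻¹ * ∫ s in (1 - y) * x..(1 - y) * x + y, F s := by
  have := intervalIntegral.integral_comp_mul_add (a := 0) (b := 1) F hy ((1 - y) * x)
  simp only [mul_zero, zero_add, mul_one, smul_eq_mul] at this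
  rw [slidingAverage, add_comm ((1 - y) * x) y, ← this]
  simp only [add_comm]

theorem hasDerivAt_slidingAverage (hF : Continuous F) (hy : y ≠ 0) (x : ℝ) :
    HasDerivAt (slidingAverage y F)
      (y⁻¹ * ((1 - y) * F ((1 - y) * x + y) - (1 - y) * F ((1 - y) * x))) x := by
  have hprim : ∀ z, HasDerivAt (fun u => ∫ s in (0:ℝ)..u, F s) (F z) z := fun z =>
    (hF.integral_hasStrictDerivAt 0 z).hasDerivAt
  have hrepr : slidingAverage y F = fun x => y⁻¹ *
      ((∫ s in (0:ℝ)..(1 - y) * x + y, F s) - ∫ s in (0:ℝ)..(1 - y) * x, F s) := by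
    ext x
    rw [slidingAverage_eq_integral hy, intervalIntegral.integral_interval_sub_left
      (hF.intervalIntegrable _ _) (hF.intervalIntegrable _ _)]
  rw [hrepr]
  refine HasDerivAt.const_mul _ (HasDerivAt.sub ?_ ?_)
  · simpa [Function.comp_def, mul_comm] using
      (hprim _).comp x (((hasDerivAt_id x).const_mul (1 - y)).add_const y)
  · simpa [Function.comp_def, mul_comm] using
      (hprim _).comp x ((hasDerivAt_id x).const_mul (1 - y))

theorem contDiff_slidingAverage (hF : Continuous F) (hy : y ≠ 0) :
    ContDiff ℝ 1 (slidingAverage y F) := by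
  refine contDiff_one_iff_deriv.2
    ⟨fun x => (hasDerivAt_slidingAverage hF hy x).differentiableAt, ?_⟩
  rw [funext fun x => (hasDerivAt_slidingAverage hF hy x).deriv]
  fun_prop

theorem slidingAverage_congr {G : ℝ → ℝ} (hFG : EqOn F G (Icc 0 1)) (hy0 : 0 ≤ y)
    (hy1 : y ≤ 1) : EqOn (slidingAverage y F) (slidingAverage y G) (Icc 0 1) := fun x hx =>
  intervalIntegral.integral_congr fun t ht =>
    hFG (one_sub_mul_add_mul_mem_Icc hx (by rwa [uIcc_of_le zero_le_one] at ht) hy0 hy1)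

theorem slidingAverage_le (hF : ContinuousOn F (Icc 0 1)) (hy0 : 0 ≤ y) (hy1 : y ≤ 1)
    {x c : ℝ} (hx : x ∈ Icc (0:ℝ) 1) (hle : ∀ s ∈ Icc (0:ℝ) 1, |s - x| ≤ y → F s ≤ c) :
    slidingAverage y F x ≤ c := by
  have hmaps : MapsTo (fun t => (1 - y) * x + y * t) (Icc 0 1) (Icc 0 1) := fun t ht =>
    one_sub_mul_add_mul_mem_Icc hx ht hy0 hy1
  have hdist : ∀ t ∈ Icc (0:ℝ) 1, |(1 - y) * x + y * t - x| ≤ y := fun t ht => by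
    rw [show (1 - y) * x + y * t - x = y * (t - x) by ring, abs_mul, abs_of_nonneg hy0]
    exact mul_le_of_le_one_right hy0
      (abs_sub_le_iff.2 ⟨by linarith [ht.2, hx.1], by linarith [ht.1, hx.2]⟩)
  calc slidingAverage y F x ≤ ∫ _ in (0:ℝ)..1, c :=
        intervalIntegral.integral_mono_on zero_le_one
          ((hF.comp (by fun_prop) hmaps).intervalIntegrable_of_Icc zero_le_one)
          intervalIntegrable_const fun t ht => hle _ (hmaps ht) (hdist t ht)
    _ = c := by simp

end slidingAverage

section Gop

variable {ρ : ℝ → ℝ} (hρ : ContinuousOn ρ (Icc 0 1)) {y : ℝ} (hy0 : 0 < y) (hy1 : y ≤ 1)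
include hρ hy0 hy1

theorem Gop_le {x : ℝ} (hx : x ∈ Icc (0:ℝ) 1) : Gop y ρ x ≤ ρ x :=
  slidingAverage_le (continuousOn_sub_omegaMod hρ hy0) hy0.le hy1 hx fun s hs hsx => by
    linarith [le_abs_self (ρ s - ρ x), abs_sub_le_omegaMod_s13 hρ hy0 hs hx hsx]

theorem exists_contDiff_eqOn_Gop : ∃ g, ContDiff ℝ 1 g ∧ EqOn (Gop y ρ) g (Icc 0 1) := by
  refine ⟨slidingAverage y (IccExtend zero_le_one
    ((Icc 0 1).domRestrict fun s => ρ s - omegaMod ρ s y)),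
    contDiff_slidingAverage (continuousOn_sub_omegaMod hρ hy0).domRestrict.Icc_extend' hy0.ne', ?_⟩
  rw [Gop_eq_slidingAverage]
  exact slidingAverage_congr (fun s hs => by rw [IccExtend_of_mem zero_le_one _ hs]; rfl) hy0.le hy1

end Gop

open Polynomial in
theorem exists_polynomial_eq_integral_eval_sub_mul (R : ℝ[X]) {h : ℝ → ℝ}
    (hh : IntervalIntegrable h volume 0 1) :
    ∃ S : ℝ[X], S.natDegree ≤ R.natDegree ∧
      ∀ x, ∫ t in (0:ℝ)..1, R.eval (x - t) * h t = S.eval x := by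
  set n := R.natDegree
  have hcoeff : ∀ j, IntervalIntegrable (fun t => (hasseDeriv j R).eval (-t) * h t) volume 0 1 :=
    fun j => hh.continuousOn_mul (by fun_prop)
  refine ⟨∑ j ∈ Finset.range (n + 1),
    C (∫ t in (0:ℝ)..1, (hasseDeriv j R).eval (-t) * h t) * X ^ j, ?_, fun x => ?_⟩
  · exact natDegree_sum_le_of_forall_le _ _ fun j hj =>
      (natDegree_C_mul_X_pow_le _ _).trans (Nat.lt_succ_iff.1 (Finset.mem_range.1 hj))
  have htaylor : ∀ t, R.eval (x - t) * h t =
      ∑ j ∈ Finset.range (n + 1), x ^ j * ((hasseDeriv j R).eval (-t) * h t) := by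
    intro t
    rw [sub_eq_add_neg, ← taylor_eval,
      eval_eq_sum_range' (n := n + 1) (by rw [natDegree_taylor]; omega), Finset.sum_mul]
    refine Finset.sum_congr rfl fun j _ => ?_
    rw [taylor_coeff]
    ring
  simp_rw [htaylor]
  rw [intervalIntegral.integral_finsetSum fun j _ => (hcoeff j).const_mul _, eval_finsetSum]
  refine Finset.sum_congr rfl fun j _ => ?_
  rw [intervalIntegral.integral_const_mul, eval_mul, eval_C, eval_pow, eval_X, mul_comm]

theorem exists_polynomial_eq_Mop (P Q : Polynomial ℝ) (a : ℝ) {g : ℝ → ℝ}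
    (hg : IntervalIntegrable g volume 0 1) :
    ∃ A : Polynomial ℝ, A.natDegree ≤ max P.natDegree Q.natDegree ∧
      ∀ x, Mop P Q a g x = A.eval x := by
  obtain ⟨S, hS, hSeq⟩ := exists_polynomial_eq_integral_eval_sub_mul P
    ⟨Integrable.pos_part hg.1, Integrable.pos_part hg.2⟩
  obtain ⟨T, hT, hTeq⟩ := exists_polynomial_eq_integral_eval_sub_mul Q
    ⟨Integrable.neg_part hg.1, Integrable.neg_part hg.2⟩
  refine ⟨Polynomial.C a + S - T, ?_, fun x => ?_⟩
  · refine (Polynomial.natDegree_sub_le _ _).trans (max_le_max ?_ hT)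
    refine (Polynomial.natDegree_add_le _ _).trans (max_le ?_ hS)
    simp
  · simp only [Mop, Polynomial.eval_sub, Polynomial.eval_add, Polynomial.eval_C]
    rw [hSeq x, hTeq x]

theorem stepPhi_sub_mul_eq_indicator (x : ℝ) (φ : ℝ → ℝ) :
    (fun t => stepPhi (x - t) * φ t) = (Iio x).indicator φ := by
  ext t
  by_cases ht : t < x <;> simp [stepPhi, ht]

theorem intervalIntegrable_stepPhi_sub_mul (x : ℝ) {φ : ℝ → ℝ}
    (hφ : IntervalIntegrable φ volume 0 1) :
    IntervalIntegrable (fun t => stepPhi (x - t) * φ t) volume 0 1 := by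
  rw [stepPhi_sub_mul_eq_indicator]
  exact ⟨hφ.1.indicator measurableSet_Iio, hφ.2.indicator measurableSet_Iio⟩

theorem integral_stepPhi_sub_mul {x : ℝ} (hx : x ∈ Icc (0:ℝ) 1) (φ : ℝ → ℝ) :
    ∫ t in (0:ℝ)..1, stepPhi (x - t) * φ t = ∫ t in (0:ℝ)..x, φ t := by
  have hIoc : Ioc (0:ℝ) 1 ∩ Iio x = Ioo 0 x := by
    ext t
    simp only [mem_inter_iff, mem_Ioc, mem_Iio, mem_Ioo]
    exact ⟨fun ⟨⟨h0, _⟩, htx⟩ => ⟨h0, htx⟩, fun ⟨h0, htx⟩ => ⟨⟨h0, htx.le.trans hx.2⟩, htx⟩⟩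
  rw [stepPhi_sub_mul_eq_indicator, intervalIntegral.integral_of_le zero_le_one,
    setIntegral_indicator measurableSet_Iio, hIoc, intervalIntegral.integral_of_le hx.1,
    integral_Ioc_eq_integral_Ioo]

theorem Mop_le_add_integral {P Q : Polynomial ℝ}
    (hPQ : ∀ u ∈ Icc (-1:ℝ) 1, P.eval u ≤ stepPhi u ∧ stepPhi u ≤ Q.eval u)
    (a : ℝ) {g : ℝ → ℝ} (hg : IntervalIntegrable g volume 0 1) {x : ℝ} (hx : x ∈ Icc (0:ℝ) 1) :
    Mop P Q a g x ≤ a + ∫ t in (0:ℝ)..x, g t := by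
  have hsub : ∀ t ∈ Icc (0:ℝ) 1, x - t ∈ Icc (-1:ℝ) 1 := fun t ht =>
    ⟨by linarith [ht.2, hx.1], by linarith [ht.1, hx.2]⟩
  have hpos : IntervalIntegrable (fun t => max (g t) 0) volume 0 1 :=
    ⟨Integrable.pos_part hg.1, Integrable.pos_part hg.2⟩
  have hneg : IntervalIntegrable (fun t => max (-g t) 0) volume 0 1 :=
    ⟨Integrable.neg_part hg.1, Integrable.neg_part hg.2⟩
  have hP : ∫ t in (0:ℝ)..1, P.eval (x - t) * max (g t) 0 ≤ ∫ t in (0:ℝ)..x, max (g t) 0 := by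
    rw [← integral_stepPhi_sub_mul hx]
    exact intervalIntegral.integral_mono_on zero_le_one (hpos.continuousOn_mul (by fun_prop))
      (intervalIntegrable_stepPhi_sub_mul x hpos) fun t ht =>
        mul_le_mul_of_nonneg_right (hPQ _ (hsub t ht)).1 (le_max_right _ _)
  have hQ : ∫ t in (0:ℝ)..x, max (-g t) 0 ≤ ∫ t in (0:ℝ)..1, Q.eval (x - t) * max (-g t) 0 := by
    rw [← integral_stepPhi_sub_mul hx]
    exact intervalIntegral.integral_mono_on zero_le_one
      (intervalIntegrable_stepPhi_sub_mul x hneg) (hneg.continuousOn_mul (by fun_prop))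
        fun t ht => mul_le_mul_of_nonneg_right (hPQ _ (hsub t ht)).2 (le_max_right _ _)
  have hsplit : ∫ t in (0:ℝ)..x, g t =
      (∫ t in (0:ℝ)..x, max (g t) 0) - ∫ t in (0:ℝ)..x, max (-g t) 0 := by
    have hIcc : uIcc 0 x ⊆ uIcc (0:ℝ) 1 :=
      uIcc_subset_uIcc_left (by rwa [uIcc_of_le zero_le_one])
    rw [← intervalIntegral.integral_sub (hpos.mono_set hIcc) (hneg.mono_set hIcc)]
    simp only [max_zero_sub_max_neg_zero_eq_self]
  rw [Mop, hsplit]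
  linarith

theorem Nop_neg (P Q : Polynomial ℝ) (a : ℝ) (g : ℝ → ℝ) (x : ℝ) :
    Nop P Q (-a) (-g) x = -Mop P Q a g x := by
  simp only [Nop, Mop, Pi.neg_apply, neg_neg]
  ring

theorem Mop_congr_deriv {f g : ℝ → ℝ} (hfg : EqOn f g (Icc 0 1)) (P Q : Polynomial ℝ) (x : ℝ) :
    Mop P Q (f 0) (deriv f) x = Mop P Q (g 0) (deriv g) x := by
  have hderiv : EqOn (deriv f) (deriv g) (Ioo 0 1) := fun t ht =>
    Filter.EventuallyEq.deriv_eq (Filter.eventually_of_mem (Icc_mem_nhds ht.1 ht.2) hfg)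
  simp only [Mop, hfg (left_mem_Icc.2 zero_le_one)]
  refine congrArg₂ _ (congrArg₂ _ rfl ?_) ?_ <;>
    refine intervalIntegral.integral_congr_Ioo_of_le zero_le_one fun t ht => ?_ <;>
    simp only [hderiv ht]

theorem Mop_deriv_le_of_contDiff {P Q : Polynomial ℝ}
    (hPQ : ∀ u ∈ Icc (-1:ℝ) 1, P.eval u ≤ stepPhi u ∧ stepPhi u ≤ Q.eval u)
    {g : ℝ → ℝ} (hg : ContDiff ℝ 1 g) {x : ℝ} (hx : x ∈ Icc (0:ℝ) 1) :
    Mop P Q (g 0) (deriv g) x ≤ g x := by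
  have hint : ∀ b, IntervalIntegrable (deriv g) volume 0 b := fun _ =>
    (hg.continuous_deriv le_rfl).intervalIntegrable _ _
  have hftc : ∫ t in (0:ℝ)..x, deriv g t = g x - g 0 :=
    intervalIntegral.integral_deriv_eq_sub (fun t _ => hg.differentiable one_ne_zero t) (hint x)
  have := Mop_le_add_integral hPQ (g 0) (hint 1) hx
  linarith

/-- Theorem 4.3, sandwich part: `A_k(ρ) = M_k(G_{1/k}(ρ))` and `B_k(ρ) = N_k(H_{1/k}(ρ))`
are polynomials of degree at most `k` sandwiching `ρ`. -/
theorem stmt13 (k : ℕ) (hk : 2 ≤ k) (P Q : Polynomial ℝ)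
    (hPdeg : P.natDegree ≤ k) (hQdeg : Q.natDegree ≤ k)
    (hPQ : ∀ u ∈ Icc (-1:ℝ) 1, P.eval u ≤ stepPhi u ∧ stepPhi u ≤ Q.eval u)
    (ρ : ℝ → ℝ) (hρ : ContinuousOn ρ (Icc (0:ℝ) 1)) :
    (∃ A' : Polynomial ℝ, A'.natDegree ≤ k ∧ ∀ x ∈ Icc (0:ℝ) 1,
      Mop P Q (Gop (1 / k) ρ 0) (deriv (Gop (1 / k) ρ)) x = A'.eval x) ∧
    (∃ B' : Polynomial ℝ, B'.natDegree ≤ k ∧ ∀ x ∈ Icc (0:ℝ) 1,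
      Nop P Q (Hop (1 / k) ρ 0) (deriv (Hop (1 / k) ρ)) x = B'.eval x) ∧
    (∀ x ∈ Icc (0:ℝ) 1,
      Mop P Q (Gop (1 / k) ρ 0) (deriv (Gop (1 / k) ρ)) x ≤ ρ x ∧
      ρ x ≤ Nop P Q (Hop (1 / k) ρ 0) (deriv (Hop (1 / k) ρ)) x) := by
  have hk1 : (1:ℝ) ≤ k := by exact_mod_cast one_le_two.trans hk
  have hy0 : (0:ℝ) < 1 / k := by positivity
  have hy1 : (1:ℝ) / k ≤ 1 := (div_le_one (by positivity)).2 hk1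
  obtain ⟨g, hg, hGg⟩ := exists_contDiff_eqOn_Gop hρ hy0 hy1
  obtain ⟨h, hh, hGh⟩ := exists_contDiff_eqOn_Gop (ρ := -ρ) hρ.neg hy0 hy1
  have hM : ∀ x, Mop P Q (Gop (1 / k) ρ 0) (deriv (Gop (1 / k) ρ)) x =
      Mop P Q (g 0) (deriv g) x := Mop_congr_deriv hGg P Q
  have hN : ∀ x, Nop P Q (Hop (1 / k) ρ 0) (deriv (Hop (1 / k) ρ)) x =
      -Mop P Q (h 0) (deriv h) x := fun x => by
    rw [Hop_eq_neg_Gop_neg, deriv.neg', ← Mop_congr_deriv hGh, ← Nop_neg]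
    rfl
  obtain ⟨A, hAdeg, hA⟩ := exists_polynomial_eq_Mop P Q (g 0)
    ((hg.continuous_deriv le_rfl).intervalIntegrable 0 1)
  obtain ⟨B, hBdeg, hB⟩ := exists_polynomial_eq_Mop P Q (h 0)
    ((hh.continuous_deriv le_rfl).intervalIntegrable 0 1)
  refine ⟨⟨A, hAdeg.trans (max_le hPdeg hQdeg), fun x _ => (hM x).trans (hA x)⟩,
    ⟨-B, (Polynomial.natDegree_neg B).le.trans (hBdeg.trans (max_le hPdeg hQdeg)),
      fun x _ => by rw [hN, hB, Polynomial.eval_neg]⟩, fun x hx => ⟨?_, ?_⟩⟩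
  · have hGle := Gop_le hρ hy0 hy1 hx
    rw [hGg hx] at hGle
    rw [hM]
    exact (Mop_deriv_le_of_contDiff hPQ hg hx).trans hGle
  · have hlow := Mop_deriv_le_of_contDiff hPQ hh hx
    have hGle := Gop_le (ρ := -ρ) hρ.neg hy0 hy1 hx
    rw [hGh hx, Pi.neg_apply] at hGle
    rw [hN]
    linarith
end
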